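/- arXiv:1908.11580 — 5 statements merged into one kernel-verified Lean document; each statement's English description precedes it below -/
import Mathlib

section
/- For all integers n ≥ 2 and 1 ≤ j ≤ n, the signed Stirling numbers of the first kind satisfy |η_{j,n}| ≤ ((n-1)!/(j-1)!)² / (n-j)!. -/
/-- Falling factorial. -/
noncomputable def ff (z : ℂ) : ℕ → ℂ
  | 0 => 1
  | n + 1 => ff z n * (z - n)

/-!
The falling factorial is Mathlib's `descPochhammer`, whose integer coefficients are the unsigned
Stirling numbers of the first kind `stirlingFirst n j` up to the sign `(-1) ^ (n + j)`; so `η j n`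
is determined and `|η j n| = stirlingFirst n j`. Now `stirlingFirst n j` is the elementary
symmetric polynomial of degree `n - j` in `1, …, n - 1`: it has `(n-1).choose (j-1)` terms, each at
most `(n - 1) ⋯ j = (n-1)! / (j-1)!`, and this product is the claimed bound. The induction along
`stirlingFirst_succ_succ` and Pascal's rule is the recursive form of this count.
-/

open Polynomial Nat

theorem stirlingFirst_succ_le_choose_mul_descFactorial (n k : ℕ) :
    stirlingFirst (n + 1) (k + 1) ≤ n.choose k * n.descFactorial (n - k) := by
  induction n generalizing k with
  | zero => cases k <;> simp [stirlingFirst_succ_succ]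
  | succ n ih =>
    rcases k with _ | k
    · rw [stirlingFirst_one_right, Nat.choose_zero_right, one_mul, Nat.sub_zero,
        Nat.descFactorial_self]
    have hmono : n.descFactorial (n - k) ≤ (n + 1).descFactorial (n - k) :=
      Nat.descFactorial_le _ n.le_succ
    have hshift : n.choose (k + 1) * ((n + 1) * n.descFactorial (n - (k + 1)))
        = n.choose (k + 1) * (n + 1).descFactorial (n - k) := by
      rcases Nat.lt_or_ge k n with hk | hk
      · rw [show n - k = n - (k + 1) + 1 by omega, Nat.succ_descFactorial_succ]
      · rw [Nat.choose_eq_zero_of_lt (by omega), zero_mul, zero_mul]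
    calc stirlingFirst (n + 1 + 1) (k + 1 + 1)
        = (n + 1) * stirlingFirst (n + 1) (k + 1 + 1) + stirlingFirst (n + 1) (k + 1) :=
          stirlingFirst_succ_succ _ _
      _ ≤ (n + 1) * (n.choose (k + 1) * n.descFactorial (n - (k + 1)))
          + n.choose k * n.descFactorial (n - k) :=
          Nat.add_le_add (Nat.mul_le_mul_left _ (ih _)) (ih _)
      _ ≤ n.choose (k + 1) * (n + 1).descFactorial (n - k)
          + n.choose k * (n + 1).descFactorial (n - k) := by
          rw [← hshift, Nat.mul_left_comm]
          exact Nat.add_le_add_left (Nat.mul_le_mul_left _ hmono) _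
      _ = (n + 1).choose (k + 1) * (n + 1).descFactorial (n + 1 - (k + 1)) := by
          rw [Nat.choose_succ_succ', Nat.add_sub_add_right]
          ring

theorem choose_mul_descFactorial_eq (n k : ℕ) (hk : k ≤ n) :
    ((n.choose k * n.descFactorial (n - k) : ℕ) : ℝ) = (n ! / k !) ^ 2 / (n - k)! := by
  have hdesc : ((n - (n - k))! : ℝ) * n.descFactorial (n - k) = n ! := by
    exact_mod_cast Nat.factorial_mul_descFactorial (Nat.sub_le n k)
  rw [Nat.sub_sub_self hk] at hdesc
  rw [Nat.cast_mul, Nat.cast_choose ℝ hk, ← hdesc]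
  field_simp

theorem coeff_descPochhammer_int (n k : ℕ) :
    (descPochhammer ℤ n).coeff k = (-1) ^ (n + k) * stirlingFirst n k := by
  induction n generalizing k with
  | zero => rcases k with _ | k <;> simp [coeff_one]
  | succ n ih =>
    rcases k with _ | k
    · simp [coeff_zero_eq_eval_zero]
    · rw [descPochhammer_succ_right, ← C_eq_natCast, coeff_mul_X_sub_C, ih, ih,
        stirlingFirst_succ_succ]
      push_cast
      ring

theorem ff_eq_eval_descPochhammer (z : ℂ) (n : ℕ) : ff z n = (descPochhammer ℂ n).eval z := by
  induction n with
  | zero => simp [ff]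
  | succ n ih => rw [ff, ih, descPochhammer_succ_eval]

theorem coeff_eq_of_forall_eval_eq {R : Type*} [CommRing R] [IsDomain R] [Infinite R]
    {p : R[X]} {a : ℕ → R} {n j : ℕ}
    (h : ∀ z, p.eval z = ∑ i ∈ Finset.range (n + 1), a i * z ^ i) (hj : j ≤ n) :
    p.coeff j = a j := by
  have hp : p = ∑ i ∈ Finset.range (n + 1), C (a i) * X ^ i :=
    Polynomial.funext fun z => by simp [h, eval_finsetSum]
  rw [hp, finsetSum_coeff]
  simp [Nat.lt_succ_of_le hj]

theorem stmt_5_general (η : ℕ → ℕ → ℝ)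
    (hexp : ∀ n : ℕ, ∀ z : ℂ, ff z n = ∑ j ∈ Finset.range (n + 1), (η j n : ℂ) * z ^ j)
    (n j : ℕ) (hj1 : 1 ≤ j) (hjn : j ≤ n) :
    |η j n| ≤ (((n - 1).factorial : ℝ) / ((j - 1).factorial : ℝ)) ^ 2
      / ((n - j).factorial : ℝ) := by
  have hcoeff : (η j n : ℂ) = (descPochhammer ℂ n).coeff j :=
    (coeff_eq_of_forall_eval_eq (fun z => by rw [← ff_eq_eval_descPochhammer, hexp]) hjn).symm
  have hη : η j n = (-1) ^ (n + j) * stirlingFirst n j := by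
    rw [← descPochhammer_map (Int.castRingHom ℂ), coeff_map, coeff_descPochhammer_int,
      eq_intCast] at hcoeff
    exact_mod_cast hcoeff
  obtain ⟨m, rfl⟩ : ∃ m, n = m + 1 := ⟨n - 1, by omega⟩
  obtain ⟨k, rfl⟩ : ∃ k, j = k + 1 := ⟨j - 1, by omega⟩
  rw [hη, abs_mul, abs_neg_one_pow, one_mul, Nat.abs_cast, Nat.add_sub_cancel, Nat.add_sub_cancel,
    Nat.add_sub_add_right, ← choose_mul_descFactorial_eq m k (by omega)]
  exact_mod_cast stirlingFirst_succ_le_choose_mul_descFactorial m k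

/-- `|η_{j,n}| ≤ ((n-1)!/(j-1)!)² / (n-j)!` for the signed Stirling numbers of the
first kind, `n ≥ 2`, `1 ≤ j ≤ n`. -/
theorem stmt_5 (η : ℕ → ℕ → ℝ)
    (hexp : ∀ n : ℕ, ∀ z : ℂ, ff z n = ∑ j ∈ Finset.range (n + 1), (η j n : ℂ) * z ^ j)
    (n j : ℕ) (hn : 2 ≤ n) (hj1 : 1 ≤ j) (hjn : j ≤ n) :
    |η j n| ≤ (((n - 1).factorial : ℝ) / ((j - 1).factorial : ℝ)) ^ 2
      / ((n - j).factorial : ℝ) :=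
  stmt_5_general η hexp n j hj1 hjn
end

section
/- For all integers n ≥ 2 and 1 ≤ k ≤ n, the Stirling numbers of the second kind satisfy η̃_{k,n} ≤ ((n-1)!/(k-1)!)² / (n-k)!. -/
/-- Stirling numbers of the second kind. -/
def st : ℕ → ℕ → ℕ
  | 0, 0 => 1
  | _ + 1, 0 => 0
  | 0, _ + 1 => 0
  | k + 1, n + 1 => st k n + (k + 1) * st (k + 1) n

lemma st_gt : ∀ n k, n < k → st k n = 0 := by
  intro n
  induction n with
  | zero => intro k hk; match k, hk with | k+1, _ => rfl
  | succ n ih =>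
    intro k hk
    match k, hk with
    | k+1, hk =>
      show st k n + (k+1) * st (k+1) n = 0
      rw [ih k (by omega), ih (k+1) (by omega)]; simp

lemma st_self : ∀ n, st n n = 1 := by
  intro n
  induction n with
  | zero => rfl
  | succ n ih =>
    show st n n + (n+1) * st (n+1) n = 1
    rw [ih, st_gt n (n+1) (by omega)]; simp

lemma expand : ∀ (n : ℕ) (z : ℂ),
    z ^ n = ∑ k ∈ Finset.range (n + 1), (st k n : ℂ) * ff z k := by
  intro n
  induction n with
  | zero => intro z; simp [ff, st]
  | succ n ih =>
    intro z
    have key : ∀ k : ℕ, z * ff z k = ff z (k + 1) + (k : ℂ) * ff z k := by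
      intro k
      show z * ff z k = ff z k * (z - k) + (k : ℂ) * ff z k
      ring
    have hsplit : z ^ (n + 1)
        = (∑ k ∈ Finset.range (n + 1), (st k n : ℂ) * ff z (k + 1))
          + ∑ k ∈ Finset.range (n + 1), (k : ℂ) * (st k n : ℂ) * ff z k := by
      rw [← Finset.sum_add_distrib]
      rw [pow_succ, mul_comm, ih z, Finset.mul_sum]
      refine Finset.sum_congr rfl fun k _ => ?_
      rw [mul_left_comm, key k]
      ring
    have hS2 : ∑ k ∈ Finset.range (n + 1), (k : ℂ) * (st k n : ℂ) * ff z k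
        = ∑ k ∈ Finset.range (n + 1), ((k : ℂ) + 1) * (st (k + 1) n : ℂ) * ff z (k + 1) := by
      rw [Finset.sum_range_succ' (fun k => (k : ℂ) * (st k n : ℂ) * ff z k) n]
      rw [Finset.sum_range_succ (fun k => ((k : ℂ) + 1) * (st (k + 1) n : ℂ) * ff z (k + 1)) n]
      rw [st_gt n (n + 1) (by omega)]
      push_cast
      simp
    have hR : ∑ k ∈ Finset.range (n + 2), (st k (n + 1) : ℂ) * ff z k
        = ∑ k ∈ Finset.range (n + 1),
            ((st k n : ℂ) + ((k : ℂ) + 1) * (st (k + 1) n : ℂ)) * ff z (k + 1) := by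
      rw [Finset.sum_range_succ' (fun k => (st k (n + 1) : ℂ) * ff z k) (n + 1)]
      have h0 : (st 0 (n + 1) : ℂ) = 0 := by norm_cast
      rw [h0]
      simp only [zero_mul, add_zero]
      refine Finset.sum_congr rfl fun k _ => ?_
      have : st (k + 1) (n + 1) = st k n + (k + 1) * st (k + 1) n := rfl
      rw [this]
      push_cast
      ring
    rw [hsplit, hS2, hR, ← Finset.sum_add_distrib]
    refine Finset.sum_congr rfl fun k _ => ?_
    ring

lemma ff_nat_zero : ∀ (k j : ℕ), j < k → ff (j : ℂ) k = 0 := by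
  intro k
  induction k with
  | zero => intro j hj; omega
  | succ k ih =>
    intro j hj
    show ff (j : ℂ) k * ((j : ℂ) - k) = 0
    rcases Nat.lt_or_ge j k with h | h
    · rw [ih j h, zero_mul]
    · have : j = k := by omega
      subst this
      simp

lemma ff_nat_ne : ∀ (k j : ℕ), k ≤ j → ff (j : ℂ) k ≠ 0 := by
  intro k
  induction k with
  | zero => intro j _; show (1 : ℂ) ≠ 0; exact one_ne_zero
  | succ k ih =>
    intro j hj
    show ff (j : ℂ) k * ((j : ℂ) - k) ≠ 0
    refine mul_ne_zero (ih j (by omega)) ?_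
    rw [sub_ne_zero]
    exact_mod_cast (by omega : j ≠ k)

lemma st_bound : ∀ n k, 1 ≤ k → k ≤ n →
    st k n * ((k - 1).factorial) ^ 2 * (n - k).factorial ≤ ((n - 1).factorial) ^ 2 := by
  intro n
  induction n with
  | zero => intro k h1 h2; omega
  | succ n ih =>
    intro k hk1 hkn
    rcases Nat.eq_or_lt_of_le hkn with heq | hlt
    · subst heq
      rw [st_self]
      simp
    · have hkn' : k ≤ n := by omega
      have hn1 : 1 ≤ n := by omega
      rcases Nat.eq_or_lt_of_le hk1 with h1 | h1
      · -- k = 1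
        subst h1
        obtain ⟨m, rfl⟩ : ∃ m, n = m + 1 := ⟨n - 1, by omega⟩
        have hst : st 1 (m + 2) = st 1 (m + 1) := by
          show st 0 (m + 1) + 1 * st 1 (m + 1) = st 1 (m + 1)
          simp [st]
        have IH := ih 1 le_rfl (by omega)
        simp only [Nat.sub_self, Nat.factorial, Nat.one_mul, Nat.mul_one, pow_two,
          Nat.add_sub_cancel] at IH ⊢
        -- IH : st 1 (m+1) * 1 * m! ≤ m! * m!  (roughly)
        have hle : st 1 (m + 1) ≤ m.factorial := by
          have hpos : 0 < m.factorial := Nat.factorial_pos m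
          nlinarith [IH]
        rw [hst]
        have : (m + 1).factorial = (m + 1) * m.factorial := rfl
        nlinarith [Nat.factorial_pos m, Nat.factorial_pos (m+1),
          Nat.mul_le_mul_right ((m+1).factorial) hle,
          Nat.factorial_le (show m ≤ m + 1 by omega)]
      · -- 2 ≤ k ≤ n
        obtain ⟨j, rfl⟩ : ∃ j, k = j + 2 := ⟨k - 2, by omega⟩
        obtain ⟨r, rfl⟩ : ∃ r, n = j + 2 + r := ⟨n - (j + 2), by omega⟩
        have IH1 : st (j + 1) (j + 2 + r) * (j.factorial) ^ 2 * (r + 1).factorial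
            ≤ ((j + r + 1).factorial) ^ 2 := by
          have := ih (j + 1) (by omega) (by omega)
          simpa [show j + 2 + r - (j + 1) = r + 1 by omega,
            show j + 2 + r - 1 = j + r + 1 by omega] using this
        have IH2 : st (j + 2) (j + 2 + r) * ((j + 1).factorial) ^ 2 * r.factorial
            ≤ ((j + r + 1).factorial) ^ 2 := by
          have := ih (j + 2) (by omega) (by omega)
          simpa [show j + 2 + r - (j + 2) = r by omega,
            show j + 2 + r - 1 = j + r + 1 by omega] using this
        have hst : st (j + 2) (j + 2 + r + 1)
            = st (j + 1) (j + 2 + r) + (j + 2) * st (j + 2) (j + 2 + r) := rfl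
        have hsub1 : j + 2 + r + 1 - (j + 2) = r + 1 := by omega
        have hsub2 : j + 2 + r + 1 - 1 = j + r + 2 := by omega
        have hsub3 : j + 2 - 1 = j + 1 := rfl
        rw [hst, hsub1, hsub2, hsub3]
        have hf1 : (j + 1).factorial = (j + 1) * j.factorial := rfl
        have hf2 : (r + 1).factorial = (r + 1) * r.factorial := rfl
        have hf3 : (j + r + 2).factorial = (j + r + 2) * (j + r + 1).factorial := rfl
        rw [hf2] at IH1
        rw [hf1] at IH2
        rw [hf1, hf2, hf3]
        have H1 := Nat.mul_le_mul_right ((j + 1) ^ 2) IH1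
        have H2 := Nat.mul_le_mul_right ((j + 2) * (r + 1)) IH2
        have H3 := Nat.mul_le_mul_right ((j + r + 1).factorial ^ 2)
          (show (j + 1) ^ 2 + (j + 2) * (r + 1) ≤ (j + r + 2) ^ 2 by nlinarith)
        set a := st (j + 1) (j + 2 + r) with ha
        set b := st (j + 2) (j + 2 + r) with hb
        set J := j.factorial with hJ
        set R := r.factorial with hR
        set A := (j + r + 1).factorial with hA
        calc (a + (j + 2) * b) * ((j + 1) * J) ^ 2 * ((r + 1) * R)
            = a * J ^ 2 * ((r + 1) * R) * ((j + 1) ^ 2)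
              + b * ((j + 1) * J) ^ 2 * R * ((j + 2) * (r + 1)) := by ring
          _ ≤ A ^ 2 * ((j + 1) ^ 2) + A ^ 2 * ((j + 2) * (r + 1)) := Nat.add_le_add H1 H2
          _ = ((j + 1) ^ 2 + (j + 2) * (r + 1)) * A ^ 2 := by ring
          _ ≤ (j + r + 2) ^ 2 * A ^ 2 := H3
          _ = ((j + r + 2) * A) ^ 2 := by ring

/-- `η̃_{k,n} ≤ ((n-1)!/(k-1)!)² / (n-k)!` for the Stirling numbers of the second kind,
`n ≥ 2`, `1 ≤ k ≤ n`. -/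
theorem stmt_6 (η' : ℕ → ℕ → ℝ)
    (hexp : ∀ n : ℕ, ∀ z : ℂ, z ^ n = ∑ k ∈ Finset.range (n + 1), (η' k n : ℂ) * ff z k)
    (n k : ℕ) (hn : 2 ≤ n) (hk1 : 1 ≤ k) (hkn : k ≤ n) :
    η' k n ≤ (((n - 1).factorial : ℝ) / ((k - 1).factorial : ℝ)) ^ 2
      / ((n - k).factorial : ℝ) := by
  have huniq : ∀ j, j ≤ n → η' j n = (st j n : ℝ) := by
    intro j
    induction j using Nat.strong_induction_on with
    | _ j ih =>
      intro hjn
      have h3 : ∑ m ∈ Finset.range (n + 1), ((η' m n : ℂ) - (st m n : ℂ)) * ff (j : ℂ) m = 0 := by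
        simp only [sub_mul, Finset.sum_sub_distrib]
        rw [← hexp n (j : ℂ), ← expand n (j : ℂ), sub_self]
      have h4 : ((η' j n : ℂ) - (st j n : ℂ)) * ff (j : ℂ) j = 0 := by
        rw [← h3]
        symm
        apply Finset.sum_eq_single_of_mem j (Finset.mem_range.mpr (by omega))
        intro m hm hne
        rcases Nat.lt_or_ge m j with h | h
        · rw [ih m h (by omega)]
          push_cast
          rw [sub_self, zero_mul]
        · rw [ff_nat_zero m j (by omega), mul_zero]
      have h5 : (η' j n : ℂ) = (st j n : ℂ) := by
        have := (mul_eq_zero.mp h4).resolve_right (ff_nat_ne j j le_rfl)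
        linear_combination this
      exact_mod_cast h5
  rw [huniq k hkn]
  have hb := st_bound n k hk1 hkn
  have hkf : (0 : ℝ) < ((k - 1).factorial : ℝ) := by exact_mod_cast (k - 1).factorial_pos
  have hnf : (0 : ℝ) < ((n - k).factorial : ℝ) := by exact_mod_cast (n - k).factorial_pos
  rw [div_pow, div_div, le_div_iff₀ (by positivity)]
  have : ((st k n : ℝ)) * (((k - 1).factorial : ℝ) ^ 2 * ((n - k).factorial : ℝ))
      = ((st k n * ((k - 1).factorial) ^ 2 * (n - k).factorial : ℕ) : ℝ) := by push_cast; ring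
  rw [this]
  exact_mod_cast hb
end

section
/- If (aₙ) are complex numbers with |aₙ| ≤ K/n! for some constant K > 0, then the binomial series Σ_{n=0}^∞ aₙ z^{\underline{n}} converges uniformly on every compact subset of the right half plane Re z > 0. -/
open Filter

/-! On a compact subset of `Re z > 0` we have `‖z‖ ≤ R` and `Re z ≥ δ > 0`, hence
`‖z - k‖² ≤ k² - 2δk + R²`, which is at most `(k - δ/2)²` for large `k`. So
`‖aₙ z^{\underline n}‖ ≤ K ∏_{k<n} bₖ / (k + 1)` with `bₖ = √(k² - 2δk + R²)` independent of `z`.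
This majorant satisfies `(n + 1) uₙ₊₁ ≤ (n - δ/2) uₙ` eventually, so it is summable by Raabe's
test (it decays like `n^(-1-δ/2)`), and the Weierstrass M-test gives uniform convergence. -/

open Finset

/-- Raabe's test: summing `ε uₙ ≤ n uₙ - (n + 1) uₙ₊₁` telescopes, bounding the partial sums. -/
theorem summable_of_succ_mul_le {u : ℕ → ℝ} {ε : ℝ} (hε : 0 < ε) (hu : ∀ n, 0 ≤ u n)
    (h : ∀ᶠ n : ℕ in atTop, ((n : ℝ) + 1) * u (n + 1) ≤ (n - ε) * u n) : Summable u := by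
  obtain ⟨N, hN⟩ := eventually_atTop.1 h
  have telescope : ∀ M, ε * ∑ i ∈ range M, u (i + N) + (M + N : ℕ) * u (M + N) ≤ N * u N := by
    intro M
    induction M with
    | zero => simp
    | succ M ih =>
      have := hN (M + N) (Nat.le_add_left N M)
      rw [sum_range_succ, Nat.add_right_comm]
      push_cast at ih this ⊢
      linarith
  refine (summable_nat_add_iff N).1 <|
    summable_of_sum_range_le (c := N * u N / ε) (fun i => hu _) fun M => ?_
  rw [le_div_iff₀' hε]
  have := telescope M
  have : 0 ≤ ((M + N : ℕ) : ℝ) * u (M + N) := mul_nonneg (Nat.cast_nonneg _) (hu _)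
  linarith

theorem summable_prod_div_succ {b : ℕ → ℝ} {ε : ℝ} (hε : 0 < ε) (hb : ∀ k, 0 ≤ b k)
    (h : ∀ᶠ k : ℕ in atTop, b k ≤ k - ε) :
    Summable fun n => ∏ k ∈ range n, b k / (k + 1) := by
  have hprod : ∀ n, 0 ≤ ∏ k ∈ range n, b k / (k + 1) := fun n =>
    prod_nonneg fun k _ => div_nonneg (hb k) (by positivity)
  refine summable_of_succ_mul_le hε hprod ?_
  filter_upwards [h] with n hn
  rw [prod_range_succ, mul_div_assoc', mul_div_cancel₀ _ (by positivity), mul_comm]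
  exact mul_le_mul_of_nonneg_right hn (hprod n)

theorem norm_ff_div_factorial (z : ℂ) (n : ℕ) :
    ‖ff z n‖ / n.factorial = ∏ k ∈ range n, ‖z - k‖ / (k + 1) := by
  induction n with
  | zero => simp [ff]
  | succ n ih =>
    rw [prod_range_succ, ← ih, ff, norm_mul, Nat.factorial_succ]
    push_cast
    field_simp

theorem norm_sub_ofReal_sq_le {z : ℂ} {δ R t : ℝ} (hδ : δ ≤ z.re) (hR : ‖z‖ ≤ R) (ht : 0 ≤ t) :
    ‖z - t‖ ^ 2 ≤ t ^ 2 - 2 * δ * t + R ^ 2 := by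
  have hz : ‖z‖ ^ 2 ≤ R ^ 2 := pow_le_pow_left₀ (norm_nonneg z) hR 2
  rw [Complex.sq_norm] at hz
  rw [Complex.sq_norm, Complex.normSq_sub]
  simp only [Complex.normSq_ofReal, Complex.conj_ofReal, Complex.re_mul_ofReal]
  nlinarith

theorem eventually_sqrt_le_sub {δ R : ℝ} (hδ : 0 < δ) :
    ∀ᶠ k : ℕ in atTop, √((k : ℝ) ^ 2 - 2 * δ * k + R ^ 2) ≤ k - δ / 2 := by
  filter_upwards [tendsto_natCast_atTop_atTop.eventually_ge_atTop (R ^ 2 / δ + δ)] with k hk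
  have : R ^ 2 ≤ δ * (k - δ) := by
    rw [div_add' _ _ _ hδ.ne', div_le_iff₀ hδ] at hk; linarith
  refine Real.sqrt_le_iff.2 ⟨?_, ?_⟩ <;> nlinarith

theorem stmt_10_general (a : ℕ → ℂ) (K : ℝ)
    (ha : ∀ n : ℕ, ‖a n‖ ≤ K / (n.factorial : ℝ)) :
    ∃ y : ℂ → ℂ, ∀ S : Set ℂ, IsCompact S → S ⊆ {z : ℂ | 0 < z.re} →
      TendstoUniformlyOn (fun N z => ∑ n ∈ Finset.range N, a n * ff z n) y atTop S := by
  refine ⟨fun z => ∑' n, a n * ff z n, fun S hS hSre => ?_⟩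
  obtain ⟨R, hR⟩ := hS.isBounded.exists_norm_le
  obtain ⟨δ, hδ, hδS⟩ := hS.exists_forall_le' Complex.continuous_re.continuousOn hSre
  set b : ℕ → ℝ := fun k => √((k : ℝ) ^ 2 - 2 * δ * k + R ^ 2)
  have hb : ∀ z ∈ S, ∀ k : ℕ, ‖z - k‖ ≤ b k := fun z hz k =>
    Real.le_sqrt_of_sq_le <| by
      exact_mod_cast norm_sub_ofReal_sq_le (hδS z hz) (hR z hz) k.cast_nonneg
  have hsum := summable_prod_div_succ (half_pos hδ) (fun k => Real.sqrt_nonneg _)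
    (eventually_sqrt_le_sub (R := R) hδ)
  refine tendstoUniformlyOn_tsum_nat (hsum.mul_left K) fun n z hz => ?_
  calc ‖a n * ff z n‖ = ‖a n‖ * n.factorial * (‖ff z n‖ / n.factorial) := by
        rw [norm_mul, mul_assoc, mul_div_cancel₀ _ (by positivity)]
    _ ≤ K * ∏ k ∈ range n, b k / (k + 1) := by
        rw [norm_ff_div_factorial]
        refine mul_le_mul_of_nonneg ((le_div_iff₀ (by positivity)).1 (ha n))
          (prod_le_prod (fun k _ => by positivity) fun k _ => by gcongr; exact hb z hz k)
          (by positivity) (prod_nonneg fun k _ => by positivity)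

/-- If `|aₙ| ≤ K/n!` then the binomial series converges uniformly on every compact
subset of the right half plane `Re z > 0`. -/
theorem stmt_10 (a : ℕ → ℂ) (K : ℝ) (hK : 0 < K)
    (ha : ∀ n : ℕ, ‖a n‖ ≤ K / (n.factorial : ℝ)) :
    ∃ y : ℂ → ℂ, ∀ S : Set ℂ, IsCompact S → S ⊆ {z : ℂ | 0 < z.re} →
      TendstoUniformlyOn (fun N z => ∑ n ∈ Finset.range N, a n * ff z n) y atTop S :=
  stmt_10_general a K ha
end

section
/- Let λ ≠ 0 be a complex constant. A formal binomial series Y(z) = Σ aₙ z^{\underline{n}} satisfies the recurrence coming from the difference equation Δy = λy, namely (n+1)a_{n+1} = λ aₙ for all n ≥ 0, if and only if aₙ = a₀ λⁿ/n!. Moreover, for |λ| ≤ 1, λ ≠ -1, the resulting series Σ_{n=0}^∞ (λⁿ/n!) z^{\underline{n}} converges to (1+λ)^z on the right half plane Re z > 0. -/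
/-!
Since `λⁿ/n! · z^{\underline n} = C(z, n) λⁿ`, the series is the binomial series of `(1 + λ)^z`,
which converges to it for `‖λ‖ < 1`. For `‖λ‖ = 1` and `Re z > 0` it converges absolutely:
eventually `|z - n| ≤ n - Re z / 2`, so `|C(z, n+1)| / |C(z, n)| ≤ 1 - s/(n+1)` with
`s = 1 + Re z / 2 > 1`, and Bernoulli's inequality turns this into `|C(z, n)| = O(n^{-s})`.
Abel's limit theorem along `rλ`, `r → 1⁻`, together with continuity of `w ↦ w^z` at `1 + λ`
(off the branch cut as `λ ≠ -1`) then identifies the sum.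
-/

open Filter Topology

theorem recurrence_iff_eq_pow_div_factorial {K : Type*} [Field K] [CharZero K] (l : K)
    (a : ℕ → K) :
    (∀ n : ℕ, ((n : K) + 1) * a (n + 1) = l * a n) ↔
      ∀ n : ℕ, a n = a 0 * l ^ n / (n.factorial : K) := by
  have hfac (n : ℕ) : ((n + 1).factorial : K) = ((n : K) + 1) * n.factorial := by
    push_cast [Nat.factorial_succ]; ring
  have hne (n : ℕ) : (n : K) + 1 ≠ 0 := Nat.cast_add_one_ne_zero n
  have hfne (n : ℕ) : (n.factorial : K) ≠ 0 := Nat.cast_ne_zero.mpr n.factorial_ne_zero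
  constructor
  · intro h n
    induction n with
    | zero => simp
    | succ n ih =>
      have hrec := h n
      rw [ih, mul_div_assoc', eq_div_iff (hfne n)] at hrec
      rw [hfac, pow_succ, eq_div_iff (mul_ne_zero (hne n) (hfne n))]
      linear_combination hrec
  · intro h n
    rw [h n, h (n + 1), hfac]
    field_simp
    ring

theorem sub_mul_add_one_rpow_le {s t : ℝ} (hs : 1 ≤ s) (ht : 0 ≤ t) :
    (t + 1 - s) * (t + 1) ^ s ≤ (t + 1) * t ^ s := by
  have hu : 0 < t + 1 := by linarith
  have hbern := one_add_mul_self_le_rpow_one_add (s := -(t + 1)⁻¹)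
    (by rw [neg_le_neg_iff]; exact inv_le_one_of_one_le₀ (by linarith)) hs
  rw [show 1 + -(t + 1)⁻¹ = t / (t + 1) by field_simp; ring, Real.div_rpow ht hu.le,
    le_div_iff₀ (by positivity)] at hbern
  calc (t + 1 - s) * (t + 1) ^ s = (t + 1) * ((1 + s * -(t + 1)⁻¹) * (t + 1) ^ s) := by
        field_simp; ring
    _ ≤ (t + 1) * t ^ s := by gcongr

theorem summable_of_eventually_succ_mul_rpow_le {b : ℕ → ℝ} {s : ℝ} (hs : 1 < s)
    (hb : ∀ n, 0 ≤ b n) (h : ∀ᶠ n : ℕ in atTop, b (n + 1) * ((n : ℝ) + 1) ^ s ≤ b n * n ^ s) :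
    Summable b := by
  obtain ⟨N, hN⟩ := eventually_atTop.mp h
  have hmono : ∀ n ≥ N, b n * (n : ℝ) ^ s ≤ b N * (N : ℝ) ^ s := by
    intro n hn
    induction n, hn using Nat.le_induction with
    | base => exact le_rfl
    | succ n hn ih => exact_mod_cast (hN n hn).trans ih
  refine ((Real.summable_nat_rpow.mpr (neg_lt_neg hs)).mul_left (b N * (N : ℝ) ^ s))
    |>.of_norm_bounded_eventually_nat ?_
  filter_upwards [eventually_ge_atTop (max N 1)] with n hn
  have hn : (0 : ℝ) < n := by exact_mod_cast (le_max_right N 1).trans hn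
  rw [Real.norm_of_nonneg (hb n), Real.rpow_neg hn.le, ← div_eq_mul_inv,
    le_div_iff₀ (by positivity)]
  exact hmono n (le_of_max_le_left ‹_›)

theorem ff_eq_descPochhammer_smeval (z : ℂ) (n : ℕ) :
    ff z n = (descPochhammer ℤ n).smeval z := by
  induction n with
  | zero => simp [ff]
  | succ n ih =>
    simp [ff, ih, descPochhammer_succ_right, Polynomial.smeval_mul, Polynomial.smeval_natCast]

theorem choose_eq_ff_div_factorial (z : ℂ) (n : ℕ) : Ring.choose z n = ff z n / n.factorial := by
  rw [eq_div_iff (Nat.cast_ne_zero.mpr n.factorial_ne_zero), ff_eq_descPochhammer_smeval,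
    Ring.descPochhammer_eq_factorial_smul_choose, nsmul_eq_mul']

theorem norm_sub_natCast_le {z : ℂ} {n : ℕ} (h : ‖z‖ ^ 2 ≤ z.re * n) :
    ‖z - n‖ ≤ n - z.re / 2 := by
  have hre := Complex.re_sq_le_normSq z
  rw [Complex.sq_norm, Complex.normSq_apply] at h
  rw [Complex.normSq_apply] at hre
  have hn : (0 : ℝ) ≤ n := n.cast_nonneg
  rw [← sq_le_sq₀ (norm_nonneg _) (by nlinarith), Complex.sq_norm, Complex.normSq_apply]
  simp only [Complex.sub_re, Complex.natCast_re, Complex.sub_im, Complex.natCast_im, sub_zero]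
  nlinarith

theorem summable_norm_ff_div_factorial {z : ℂ} (hz : 0 < z.re) :
    Summable fun n => ‖ff z n‖ / n.factorial := by
  refine summable_of_eventually_succ_mul_rpow_le (s := 1 + z.re / 2) (by linarith)
    (fun n => by positivity) ?_
  filter_upwards [(tendsto_natCast_atTop_atTop.const_mul_atTop hz).eventually_ge_atTop (‖z‖ ^ 2)]
    with n hn
  have hfac : ((n + 1).factorial : ℝ) = (n + 1) * n.factorial := by
    push_cast [Nat.factorial_succ]; ring
  have hstep := sub_mul_add_one_rpow_le (s := 1 + z.re / 2) (t := n) (by linarith) n.cast_nonneg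
  have hnorm := norm_sub_natCast_le hn
  rw [ff, norm_mul, hfac]
  calc ‖ff z n‖ * ‖z - n‖ / ((n + 1) * n.factorial) * ((n : ℝ) + 1) ^ (1 + z.re / 2)
      = ‖ff z n‖ / n.factorial / (n + 1) * (‖z - n‖ * ((n : ℝ) + 1) ^ (1 + z.re / 2)) := by
        field_simp
    _ ≤ ‖ff z n‖ / n.factorial / (n + 1) * (((n : ℝ) + 1) * n ^ (1 + z.re / 2)) := by
        refine mul_le_mul_of_nonneg_left (le_trans ?_ hstep) (by positivity)
        gcongr
        linarith
    _ = ‖ff z n‖ / n.factorial * n ^ (1 + z.re / 2) := by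
        field_simp

theorem hasSum_pow_div_factorial_mul_ff_of_norm_lt_one (z : ℂ) {l : ℂ} (hl : ‖l‖ < 1) :
    HasSum (fun n : ℕ => l ^ n / (n.factorial : ℂ) * ff z n) ((1 + l) ^ z) := by
  have hmem : l ∈ Metric.eball (0 : ℂ) 1 := by
    rw [← ENNReal.ofReal_one, Metric.eball_ofReal]
    simpa using hl
  have h := Complex.one_add_cpow_hasFPowerSeriesOnBall_zero (a := z) |>.hasSum hmem
  rw [zero_add] at h
  have hcoeff (n : ℕ) : binomialSeries ℂ z n (fun _ => l) = l ^ n / n.factorial * ff z n := by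
    simp only [binomialSeries_apply, List.ofFn_const, List.prod_replicate, smul_eq_mul,
      choose_eq_ff_div_factorial]
    ring
  simpa only [hcoeff] using h

theorem one_add_mem_slitPlane_of_norm_le_one {l : ℂ} (hl : ‖l‖ ≤ 1) (hl' : l ≠ -1) :
    1 + l ∈ Complex.slitPlane := by
  rw [Complex.mem_slitPlane_iff, Complex.add_re, Complex.one_re, Complex.add_im, Complex.one_im,
    zero_add]
  by_cases him : l.im = 0
  · have hre : l.re ≠ -1 := fun h => hl' (Complex.ext (by simp [h]) (by simp [him]))
    have := neg_le_of_abs_le ((Complex.abs_re_le_norm l).trans hl)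
    left
    exact neg_lt_iff_pos_add'.mp (lt_of_le_of_ne this (Ne.symm hre))
  · exact Or.inr him

theorem hasSum_pow_div_factorial_mul_ff {z l : ℂ} (hz : 0 < z.re) (hl : ‖l‖ ≤ 1)
    (hl' : l ≠ -1) :
    HasSum (fun n : ℕ => l ^ n / (n.factorial : ℂ) * ff z n) ((1 + l) ^ z) := by
  set f : ℕ → ℂ := fun n => l ^ n / (n.factorial : ℂ) * ff z n
  have hsum : Summable f := by
    refine (summable_norm_ff_div_factorial hz).of_norm_bounded fun n => ?_
    rw [norm_mul, norm_div, norm_pow, Complex.norm_natCast, div_mul_eq_mul_div, mul_comm]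
    exact div_le_div_of_nonneg_right (mul_le_of_le_one_right (norm_nonneg _)
      (pow_le_one₀ (norm_nonneg _) hl)) n.factorial.cast_nonneg
  have habel := Complex.tendsto_tsum_powerSeries_nhdsWithin_lt hsum.hasSum.tendsto_sum_nat
  have hseries : ∀ᶠ w in (𝓝[<] (1 : ℝ)).map Complex.ofReal,
      ∑' n, f n * w ^ n = (1 + w * l) ^ z := by
    rw [eventually_map]
    filter_upwards [Ioo_mem_nhdsLT (show (-1 : ℝ) < 1 by norm_num)] with x hx
    have hxl : ‖(x : ℂ) * l‖ < 1 := by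
      rw [norm_mul, Complex.norm_real, Real.norm_eq_abs]
      exact mul_lt_one_of_nonneg_of_lt_one_left (abs_nonneg x) (abs_lt.mpr hx) hl
    rw [← (hasSum_pow_div_factorial_mul_ff_of_norm_lt_one z hxl).tsum_eq]
    congr 1 with n
    simp only [f]
    ring
  have hcont : Tendsto (fun w : ℂ => (1 + w * l) ^ z) ((𝓝[<] (1 : ℝ)).map Complex.ofReal)
      (𝓝 ((1 + l) ^ z)) := by
    have hat : ContinuousAt (fun w : ℂ => (1 + w * l) ^ z) 1 := by
      refine (continuousAt_cpow_const ?_).comp (f := fun w : ℂ => 1 + w * l) (by fun_prop)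
      simpa using one_add_mem_slitPlane_of_norm_le_one hl hl'
    simpa only [one_mul] using hat.tendsto.mono_left
      ((Complex.continuous_ofReal.tendsto' 1 1 Complex.ofReal_one).mono_left nhdsWithin_le_nhds)
  rw [← tendsto_nhds_unique habel (hcont.congr' (hseries.mono fun _ h => h.symm))]
  exact hsum.hasSum

theorem stmt_14_general (l : ℂ) (a : ℕ → ℂ) :
    ((∀ n : ℕ, ((n : ℂ) + 1) * a (n + 1) = l * a n) ↔
      (∀ n : ℕ, a n = a 0 * l ^ n / (n.factorial : ℂ))) ∧
    (‖l‖ ≤ 1 → l ≠ -1 → ∀ z : ℂ, 0 < z.re →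
      HasSum (fun n : ℕ => l ^ n / (n.factorial : ℂ) * ff z n) ((1 + l) ^ z)) :=
  ⟨recurrence_iff_eq_pow_div_factorial l a,
    fun hl hl' _ hz => hasSum_pow_div_factorial_mul_ff hz hl hl'⟩

/-- For `λ ≠ 0`: the recurrence `(n+1)a_{n+1} = λ aₙ` (from `Δy = λy`) holds iff
`aₙ = a₀ λⁿ/n!`; and for `|λ| ≤ 1`, `λ ≠ -1`, the series `Σ (λⁿ/n!) z^{\underline{n}}`
converges to `(1+λ)^z` on the right half plane. -/
theorem stmt_14 (l : ℂ) (hl : l ≠ 0) (a : ℕ → ℂ) :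
    ((∀ n : ℕ, ((n : ℂ) + 1) * a (n + 1) = l * a n) ↔
      (∀ n : ℕ, a n = a 0 * l ^ n / (n.factorial : ℂ))) ∧
    (‖l‖ ≤ 1 → l ≠ -1 → ∀ z : ℂ, 0 < z.re →
      HasSum (fun n : ℕ => l ^ n / (n.factorial : ℂ) * ff z n) ((1 + l) ^ z)) :=
  stmt_14_general l a
end

section
/- Define a₀ = 1 and a_{n+1} = -aₙ / (2(n+1)(2n+1)) for n ≥ 0, so aₙ = (-1)ⁿ/(2n)!. Then the binomial series y(z) = Σ_{n=0}^∞ ((-1)ⁿ/(2n)!) z^{\underline{n}} converges locally uniformly on ℂ to an entire function satisfying the difference equation (4z+6)Δ²y(z) + 3Δy(z) + y(z) = 0. -/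
open Filter

/-- Forward difference operator. -/
noncomputable def fdiff (f : ℂ → ℂ) : ℂ → ℂ := fun z => f (z + 1) - f z

/-!
A Newton series `∑ gₙ z^{\underline{n}}` converges locally uniformly as soon as `‖gₙ‖ n! ρⁿ` is
summable for every `ρ`, because `‖z^{\underline{n}}‖ ≤ n! (‖z‖ + 1)ⁿ`. On such series `Δ` acts on
coefficients by `gₙ ↦ (n + 1) gₙ₊₁` (as `Δ z^{\underline{n+1}} = (n + 1) z^{\underline{n}}`), and
multiplication by `z` by `z · z^{\underline{n}} = z^{\underline{n+1}} + n z^{\underline{n}}`.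
The difference equation thus becomes the coefficient recurrence
`2(n+2)(n+1)(2n+3)aₙ₊₂ + (n+1)(4n+3)aₙ₊₁ + aₙ = 0`, which `aₙ = (-1)ⁿ/(2n)!` satisfies.
-/

open scoped Nat

lemma ff_succ (z : ℂ) (n : ℕ) : ff z (n + 1) = ff z n * (z - n) := rfl

lemma ff_add_one_succ (z : ℂ) (n : ℕ) : ff (z + 1) (n + 1) = (z + 1) * ff z n := by
  induction n with
  | zero => simp [ff]
  | succ m ih => rw [ff_succ, ih, ff_succ]; push_cast; ring

lemma mul_ff (z : ℂ) (n : ℕ) : z * ff z n = ff z (n + 1) + n * ff z n := by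
  rw [ff_succ]; ring

lemma norm_ff_le (z : ℂ) (n : ℕ) : ‖ff z n‖ ≤ n ! * (‖z‖ + 1) ^ n := by
  induction n with
  | zero => simp [ff]
  | succ m ih =>
    have hsub : ‖z - m‖ ≤ (m + 1) * (‖z‖ + 1) := by
      calc ‖z - m‖ ≤ ‖z‖ + m := by simpa using norm_sub_le z (m : ℂ)
        _ ≤ (m + 1) * (‖z‖ + 1) := by nlinarith [norm_nonneg z, (m.cast_nonneg : (0 : ℝ) ≤ m)]
    calc ‖ff z (m + 1)‖ = ‖ff z m‖ * ‖z - m‖ := by rw [ff_succ, norm_mul]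
      _ ≤ (m ! * (‖z‖ + 1) ^ m) * ((m + 1) * (‖z‖ + 1)) := by gcongr
      _ = (m + 1)! * (‖z‖ + 1) ^ (m + 1) := by push_cast [Nat.factorial_succ]; ring

lemma succ_mul_pow_le (n : ℕ) {ρ : ℝ} (hρ : 0 ≤ ρ) : (n + 1) * ρ ^ n ≤ (2 * ρ) ^ n := by
  have h : ((n + 1 : ℕ) : ℝ) ≤ 2 ^ n := by exact_mod_cast Nat.lt_two_pow_self
  push_cast at h
  rw [mul_pow]; gcongr

noncomputable def newtonSeries (g : ℕ → ℂ) (z : ℂ) : ℂ := ∑' n, g n * ff z n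

def NewtonSummable (g : ℕ → ℂ) : Prop :=
  ∀ ρ : ℝ, 0 ≤ ρ → Summable fun n => ‖g n‖ * n ! * ρ ^ n

def newtonDeriv (g : ℕ → ℂ) (n : ℕ) : ℂ := (n + 1) * g (n + 1)

def shiftRight (g : ℕ → ℂ) : ℕ → ℂ
  | 0 => 0
  | n + 1 => g n

namespace NewtonSummable

variable {g : ℕ → ℂ}

lemma norm_mul_ff_le (z : ℂ) (n : ℕ) : ‖g n * ff z n‖ ≤ ‖g n‖ * n ! * (‖z‖ + 1) ^ n := by
  rw [norm_mul, mul_assoc]; gcongr; exact norm_ff_le z n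

lemma hasSum (hg : NewtonSummable g) (z : ℂ) :
    HasSum (fun n => g n * ff z n) (newtonSeries g z) :=
  (Summable.of_norm_bounded (hg _ (by positivity)) (norm_mul_ff_le z)).hasSum

lemma tendstoUniformlyOn (hg : NewtonSummable g) {K : Set ℂ} (hK : IsCompact K) :
    TendstoUniformlyOn (fun N z => ∑ n ∈ Finset.range N, g n * ff z n) (newtonSeries g)
      atTop K := by
  obtain ⟨R, hR, hKR⟩ := hK.isBounded.exists_pos_norm_le
  refine tendstoUniformlyOn_tsum_nat (hg (R + 1) (by positivity)) fun n z hz => ?_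
  refine (norm_mul_ff_le z n).trans ?_
  gcongr
  exact hKR z hz

lemma newtonDeriv (hg : NewtonSummable g) : NewtonSummable (newtonDeriv g) := by
  intro ρ hρ
  refine .of_nonneg_of_le (fun n => by positivity) (fun n => ?_)
    ((summable_nat_add_iff 1).mpr (hg (ρ + 1) (by positivity)))
  have hpow : ρ ^ n ≤ (ρ + 1) ^ (n + 1) :=
    (pow_le_pow_left₀ hρ (by linarith) n).trans (pow_le_pow_right₀ (by linarith) n.le_succ)
  calc ‖_root_.newtonDeriv g n‖ * n ! * ρ ^ n = ‖g (n + 1)‖ * (n + 1)! * ρ ^ n := by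
        rw [_root_.newtonDeriv, norm_mul, ← Nat.cast_succ, Complex.norm_natCast, Nat.factorial_succ]
        push_cast; ring
    _ ≤ ‖g (n + 1)‖ * (n + 1)! * (ρ + 1) ^ (n + 1) := by gcongr

lemma natCast_mul (hg : NewtonSummable g) : NewtonSummable fun n => n * g n := by
  intro ρ hρ
  refine .of_nonneg_of_le (fun n => by positivity) (fun n => ?_) (hg (2 * ρ) (by positivity))
  rw [norm_mul, Complex.norm_natCast]
  calc (n : ℝ) * ‖g n‖ * n ! * ρ ^ n = ‖g n‖ * n ! * (n * ρ ^ n) := by ring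
    _ ≤ ‖g n‖ * n ! * (2 * ρ) ^ n := by
        gcongr; linarith [pow_nonneg hρ n, succ_mul_pow_le n hρ]

lemma shiftRight (hg : NewtonSummable g) : NewtonSummable (shiftRight g) := by
  intro ρ hρ
  refine (summable_nat_add_iff 1).mp (.of_nonneg_of_le (fun n => by positivity) (fun n => ?_)
    ((hg (2 * ρ) (by positivity)).mul_left ρ))
  calc ‖_root_.shiftRight g (n + 1)‖ * (n + 1)! * ρ ^ (n + 1)
      = ρ * (‖g n‖ * n ! * ((n + 1) * ρ ^ n)) := by
        simp only [_root_.shiftRight]; push_cast [Nat.factorial_succ]; ring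
    _ ≤ ρ * (‖g n‖ * n ! * (2 * ρ) ^ n) := by gcongr; exact succ_mul_pow_le n hρ

end NewtonSummable

variable {g : ℕ → ℂ}

lemma fdiff_newtonSeries (hg : NewtonSummable g) :
    fdiff (newtonSeries g) = newtonSeries (newtonDeriv g) := by
  funext z
  have hdiff := (hg.hasSum (z + 1)).sub (hg.hasSum z)
  rw [← hasSum_nat_add_iff' 1, Finset.sum_range_one] at hdiff
  have hterm (n : ℕ) :
      g (n + 1) * ff (z + 1) (n + 1) - g (n + 1) * ff z (n + 1) = newtonDeriv g n * ff z n := by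
    rw [ff_add_one_succ, ff_succ, newtonDeriv]; ring
  have hconst : g 0 * ff (z + 1) 0 - g 0 * ff z 0 = 0 := sub_self _
  simp only [hterm, hconst, sub_zero] at hdiff
  exact hdiff.tsum_eq.symm

lemma mul_newtonSeries (hg : NewtonSummable g) (z : ℂ) :
    z * newtonSeries g z = newtonSeries (shiftRight g) z + newtonSeries (fun n => n * g n) z := by
  have hshift := hg.shiftRight.hasSum z
  rw [← hasSum_nat_add_iff' 1, Finset.sum_range_one] at hshift
  simp only [shiftRight, zero_mul, sub_zero] at hshift
  have hprod := (hg.hasSum z).mul_left z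
  have hterm (n : ℕ) : z * (g n * ff z n) = g n * ff z (n + 1) + n * g n * ff z n := by
    rw [mul_left_comm, mul_ff]; ring
  simp only [hterm] at hprod
  exact hprod.unique (hshift.add (hg.natCast_mul.hasSum z))

lemma newtonSeries_difference_eq {a : ℕ → ℂ} (ha : NewtonSummable a) (z : ℂ) :
    (4 * z + 6) * fdiff (fdiff (newtonSeries a)) z + 3 * fdiff (newtonSeries a) z
        + newtonSeries a z =
      newtonSeries (fun n => 2 * (n + 2) * (n + 1) * (2 * n + 3) * a (n + 2)
        + (n + 1) * (4 * n + 3) * a (n + 1) + a n) z := by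
  set b := newtonDeriv a
  set c := newtonDeriv b
  have hb : NewtonSummable b := ha.newtonDeriv
  have hc : NewtonSummable c := hb.newtonDeriv
  have hsum := (((((hc.shiftRight.hasSum z).mul_left 4).add
    ((hc.natCast_mul.hasSum z).mul_left 4)).add ((hc.hasSum z).mul_left 6)).add
    ((hb.hasSum z).mul_left 3)).add (ha.hasSum z)
  have hcoef (n : ℕ) :
      4 * (shiftRight c n * ff z n) + 4 * (n * c n * ff z n) + 6 * (c n * ff z n)
        + 3 * (b n * ff z n) + a n * ff z n =
      (2 * (n + 2) * (n + 1) * (2 * n + 3) * a (n + 2) + (n + 1) * (4 * n + 3) * a (n + 1)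
        + a n) * ff z n := by
    cases n <;> simp only [c, b, shiftRight, newtonDeriv] <;> push_cast <;> ring
  simp only [hcoef] at hsum
  rw [fdiff_newtonSeries ha, fdiff_newtonSeries hb]
  calc (4 * z + 6) * newtonSeries c z + 3 * newtonSeries b z + newtonSeries a z
      = 4 * (z * newtonSeries c z) + 6 * newtonSeries c z + 3 * newtonSeries b z
          + newtonSeries a z := by ring
    _ = 4 * newtonSeries (shiftRight c) z + 4 * newtonSeries (fun n => n * c n) z
          + 6 * newtonSeries c z + 3 * newtonSeries b z + newtonSeries a z := by
        rw [mul_newtonSeries hc]; ring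
    _ = _ := hsum.tsum_eq.symm

noncomputable def cosCoeff (n : ℕ) : ℂ := (-1) ^ n / ((2 * n).factorial : ℂ)

lemma cosCoeff_succ (n : ℕ) : (2 * n + 2) * (2 * n + 1) * cosCoeff (n + 1) = -cosCoeff n := by
  have hfac : ((2 * (n + 1))! : ℂ) = (2 * n + 2) * (2 * n + 1) * (2 * n)! := by
    rw [show 2 * (n + 1) = 2 * n + 1 + 1 by ring, Nat.factorial_succ, Nat.factorial_succ]
    push_cast; ring
  have h1 : (2 * n + 1 : ℂ) ≠ 0 := by exact_mod_cast (2 * n).succ_ne_zero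
  have h2 : (2 * n + 2 : ℂ) ≠ 0 := by exact_mod_cast (2 * n + 1).succ_ne_zero
  rw [cosCoeff, cosCoeff, hfac]
  field_simp
  ring

lemma cosCoeff_recurrence (n : ℕ) :
    2 * (n + 2) * (n + 1) * (2 * n + 3) * cosCoeff (n + 2)
      + (n + 1) * (4 * n + 3) * cosCoeff (n + 1) + cosCoeff n = 0 := by
  have h := cosCoeff_succ (n + 1)
  push_cast at h
  linear_combination (n + 1 : ℂ) * h + cosCoeff_succ n

lemma newtonSummable_cosCoeff : NewtonSummable cosCoeff := by
  intro ρ hρ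
  refine .of_nonneg_of_le (fun n => by positivity) (fun n => ?_) (Real.summable_pow_div_factorial ρ)
  have hfac : (n ! * n ! : ℝ) ≤ (2 * n)! := by
    exact_mod_cast Nat.le_of_dvd (Nat.factorial_pos _)
      (two_mul n ▸ Nat.factorial_mul_factorial_dvd_factorial_add n n)
  rw [cosCoeff, norm_div, norm_pow, norm_neg, norm_one, one_pow, Complex.norm_natCast,
    le_div_iff₀ (by positivity)]
  calc 1 / ((2 * n)! : ℝ) * n ! * ρ ^ n * n ! = ρ ^ n * (n ! * n ! / (2 * n)!) := by ring
    _ ≤ ρ ^ n * 1 := by gcongr; exact div_le_one_of_le₀ hfac (by positivity)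
    _ = ρ ^ n := mul_one _

/-- The binomial series `Σ ((-1)ⁿ/(2n)!) z^{\underline{n}}` converges locally uniformly
on `ℂ` to an entire function satisfying `(4z+6)Δ²y + 3Δy + y = 0`. -/
theorem stmt_16 :
    ∃ y : ℂ → ℂ,
      (∀ K : Set ℂ, IsCompact K →
        TendstoUniformlyOn
          (fun N z => ∑ n ∈ Finset.range N, (-1 : ℂ) ^ n / ((2 * n).factorial : ℂ) * ff z n)
          y atTop K) ∧
      (∀ z : ℂ, (4 * z + 6) * fdiff (fdiff y) z + 3 * fdiff y z + y z = 0) := by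
  refine ⟨newtonSeries cosCoeff, fun K hK => newtonSummable_cosCoeff.tendstoUniformlyOn hK,
    fun z => ?_⟩
  rw [newtonSeries_difference_eq newtonSummable_cosCoeff]
  simp [cosCoeff_recurrence, newtonSeries]
end
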